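/- Let U_1, …, U_t ∈ R^{n×m}, and for each j = 1,…,t let Π⊥_{−j} be the orthogonal projection onto the orthogonal complement of the range of the concatenation [U_1 | … | U_{j−1} | U_{j+1} | … | U_t]. Define the block leave-one-out distance ℓ_B({U_j}) = min_j σ_min(Π⊥_{−j}·U_j). Then ℓ_B({U_j})/√t ≤ σ_min([U_1 | U_2 | … | U_t]) ≤ ℓ_B({U_j}), where σ_min of an n×(tm) matrix denotes its tm-th largest singular value. -/
import Mathlib


open MeasureTheory ProbabilityTheory Matrix BigOperators

noncomputable section

/-- Euclidean norm of a finitely indexed real vector. -/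
def enorm2 {ι : Type*} [Fintype ι] (x : ι → ℝ) : ℝ :=
  Real.sqrt (∑ i, x i ^ 2)

/-- `sval A k`: the `k`-th largest singular value of `A` (Courant–Fischer min–max);
`sval A 1` is the spectral norm. -/
def sval {ι κ : Type*} [Fintype ι] [Fintype κ] (A : Matrix ι κ ℝ) (k : ℕ) : ℝ :=
  ⨆ V : {V : Submodule ℝ (κ → ℝ) // Module.finrank ℝ V = k},
    ⨅ x : {x : κ → ℝ // x ∈ V.1 ∧ enorm2 x = 1}, enorm2 (A.mulVec x.1)

/-- Frobenius norm. -/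
def frobNorm {ι κ : Type*} [Fintype ι] [Fintype κ] (A : Matrix ι κ ℝ) : ℝ :=
  Real.sqrt (∑ i, ∑ j, A i j ^ 2)

/-- The law of a vector with i.i.d. `N(0, ρ²)` coordinates. -/
def vecGauss (ι : Type*) [Fintype ι] (ρ : ℝ) : Measure (ι → ℝ) :=
  Measure.pi fun _ => gaussianReal 0 (ρ ^ 2).toNNReal

instance vecGauss.instIsProbabilityMeasure (ι : Type*) [Fintype ι] (ρ : ℝ) :
    IsProbabilityMeasure (vecGauss ι ρ) := by
  unfold vecGauss; infer_instance

/-- The law of an `ι × κ` matrix (as a function) with i.i.d. `N(0, ρ²)` entries. -/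
def matGauss (ι κ : Type*) [Fintype ι] [Fintype κ] (ρ : ℝ) : Measure (ι → κ → ℝ) :=
  Measure.pi fun _ => vecGauss κ ρ

instance matGauss.instIsProbabilityMeasure (ι κ : Type*) [Fintype ι] [Fintype κ] (ρ : ℝ) :
    IsProbabilityMeasure (matGauss ι κ ρ) := by
  unfold matGauss; infer_instance

/-- Monotone tuples, used to index the columns of symmetrized Kronecker powers. -/
noncomputable instance instFintypeMonoTuples (d m : ℕ) :
    Fintype {f : Fin d → Fin m // Monotone f} :=
  Fintype.ofFinite _

/-- Orthogonal projector of `(ℝⁿ)^{⊗ d}` onto the subspace of symmetric tensors. -/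
def symProj (n d : ℕ) : Matrix (Fin d → Fin n) (Fin d → Fin n) ℝ :=
  fun r c => (1 / (Nat.factorial d : ℝ)) *
    ∑ π : Equiv.Perm (Fin d), if r = c ∘ π then 1 else 0

/-- Symmetrized `d`-th Kronecker power `U^{⊛ d}`: the column indexed by a monotone
tuple `i₁ ≤ … ≤ i_d` is `(1/d!) ∑_π u_{i_{π(1)}} ⊗ ⋯ ⊗ u_{i_{π(d)}}`. -/
def symKronPow {n m : ℕ} (U : Matrix (Fin n) (Fin m) ℝ) (d : ℕ) :
    Matrix (Fin d → Fin n) {f : Fin d → Fin m // Monotone f} ℝ :=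
  fun r c => (1 / (Nat.factorial d : ℝ)) *
    ∑ π : Equiv.Perm (Fin d), ∏ j, U (r j) (c.1 (π j))

/-- Kronecker product of `d` matrices, rows/columns indexed by tuples. -/
def kronCols {n m : ℕ} (d : ℕ) (Us : Fin d → Matrix (Fin n) (Fin m) ℝ) :
    Matrix (Fin d → Fin n) (Fin d → Fin m) ℝ :=
  fun r c => ∏ j, Us j (r j) (c j)

/-- The symmetrizing selector matrix `Perm_avg`. -/
def permAvg (d m : ℕ) : Matrix (Fin d → Fin m) {f : Fin d → Fin m // Monotone f} ℝ :=
  fun g c => (1 / (Nat.factorial d : ℝ)) *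
    ∑ π : Equiv.Perm (Fin d), if g = c.1 ∘ π then 1 else 0

/-- `P` is the symmetric idempotent matrix with kernel exactly `W`, i.e. the
orthogonal projection onto the orthogonal complement of `W`. -/
def IsOrthProjKer {ι : Type*} [Fintype ι] (P : Matrix ι ι ℝ) (W : Submodule ℝ (ι → ℝ)) : Prop :=
  Pᵀ = P ∧ P * P = P ∧ ∀ v : ι → ℝ, P.mulVec v = 0 ↔ v ∈ W

/-- Column span of a matrix. -/
def colSpan {ι κ : Type*} (A : Matrix ι κ ℝ) : Submodule ℝ (ι → ℝ) :=
  Submodule.span ℝ (Set.range fun j => fun i => A i j)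

/-- Horizontal concatenation of a family of matrices. -/
def hcat {ι κ₁ κ₂ : Type*} (M : κ₁ → Matrix ι κ₂ ℝ) : Matrix ι (κ₁ × κ₂) ℝ :=
  fun r c => M c.1 r c.2


section helpers

variable {ι κ : Type*} [Fintype ι] [Fintype κ]

lemma enorm2_nonneg (x : ι → ℝ) : 0 ≤ enorm2 x := Real.sqrt_nonneg _

lemma enorm2_sq (x : ι → ℝ) : enorm2 x ^ 2 = ∑ i, x i ^ 2 :=
  Real.sq_sqrt (by positivity)

lemma enorm2_eq_zero_iff (x : ι → ℝ) : enorm2 x = 0 ↔ x = 0 := by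
  unfold enorm2
  rw [Real.sqrt_eq_zero (by positivity)]
  constructor
  · intro h
    funext i
    have := (Finset.sum_eq_zero_iff_of_nonneg (fun i _ => sq_nonneg (x i))).1 h i
      (Finset.mem_univ i)
    exact pow_eq_zero_iff (two_ne_zero) |>.mp this
  · rintro rfl; simp

lemma enorm2_smul (c : ℝ) (x : ι → ℝ) : enorm2 (c • x) = |c| * enorm2 x := by
  unfold enorm2
  have h : ∑ i, (c • x) i ^ 2 = c ^ 2 * ∑ i, x i ^ 2 := by
    rw [Finset.mul_sum]
    refine Finset.sum_congr rfl fun i _ => ?_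
    simp [mul_pow]
  rw [h, Real.sqrt_mul (sq_nonneg c), Real.sqrt_sq_eq_abs]

lemma enorm2_dot_le (x y : ι → ℝ) : ∑ i, x i * y i ≤ enorm2 x * enorm2 y :=
  Real.sum_mul_le_sqrt_mul_sqrt _ _ _

lemma enorm2_single [DecidableEq ι] (i : ι) : enorm2 (Pi.single i (1 : ℝ)) = 1 := by
  unfold enorm2
  set y : ι → ℝ := Pi.single i (1 : ℝ) with hy
  have h : ∑ j : ι, y j ^ 2 = 1 := by
    rw [Finset.sum_eq_single i]
    · simp [hy]
    · intro b _ hb; simp [hy, Pi.single_eq_of_ne hb]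
    · simp
  rw [h, Real.sqrt_one]

lemma proj_contract (P : Matrix ι ι ℝ) (hsym : Pᵀ = P) (hidem : P * P = P) (v : ι → ℝ) :
    enorm2 (P.mulVec v) ≤ enorm2 v := by
  set w := P.mulVec v with hw
  have key : ∑ i, w i * w i = ∑ i, v i * w i := by
    have h1 : w ⬝ᵥ (P *ᵥ v) = (w ᵥ* P) ⬝ᵥ v := dotProduct_mulVec w P v
    have h2 : w ᵥ* P = w := by
      rw [← mulVec_transpose, hsym, hw, mulVec_mulVec, hidem]
    rw [h2] at h1
    calc ∑ i, w i * w i = w ⬝ᵥ (P *ᵥ v) := rfl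
      _ = w ⬝ᵥ v := h1
      _ = ∑ i, v i * w i := by simp [dotProduct, mul_comm]
  have hcs : ∑ i, v i * w i ≤ enorm2 v * enorm2 w := enorm2_dot_le v w
  have hsq : enorm2 w ^ 2 ≤ enorm2 v * enorm2 w := by
    rw [enorm2_sq]
    calc ∑ i, w i ^ 2 = ∑ i, w i * w i := by simp [sq]
      _ ≤ _ := key.le.trans hcs
  rcases eq_or_lt_of_le (enorm2_nonneg w) with h0 | h0
  · rw [← h0]; exact enorm2_nonneg v
  · nlinarith [hsq]

lemma sval_full (A : Matrix ι κ ℝ) :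
    sval A (Fintype.card κ) =
      ⨅ x : {x : κ → ℝ // enorm2 x = 1}, enorm2 (A.mulVec x.1) := by
  have htop : Module.finrank ℝ (⊤ : Submodule ℝ (κ → ℝ)) = Fintype.card κ := by
    rw [finrank_top]; exact Module.finrank_fintype_fun_eq_card ℝ
  letI : Unique {V : Submodule ℝ (κ → ℝ) // Module.finrank ℝ V = Fintype.card κ} :=
    { default := ⟨⊤, htop⟩
      uniq := fun V => Subtype.ext (Submodule.eq_top_of_finrank_eq (by
        rw [V.2, Module.finrank_fintype_fun_eq_card])) }
  rw [sval, ciSup_unique]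
  show sInf (Set.range _) = sInf (Set.range _)
  congr 1
  ext r
  constructor
  · rintro ⟨⟨x, hx⟩, rfl⟩; exact ⟨⟨x, hx.2⟩, rfl⟩
  · rintro ⟨⟨x, hx⟩, rfl⟩
    refine ⟨⟨x, ⟨?_, hx⟩⟩, rfl⟩
    exact Submodule.mem_top (R := ℝ) (M := κ → ℝ)

lemma sval_full' (A : Matrix ι κ ℝ) (k : ℕ) (hk : k = Fintype.card κ) :
    sval A k =
      ⨅ x : {x : κ → ℝ // enorm2 x = 1}, enorm2 (A.mulVec x.1) := by
  subst hk; exact sval_full A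

lemma sphInf_nonneg (A : Matrix ι κ ℝ) :
    0 ≤ ⨅ x : {x : κ → ℝ // enorm2 x = 1}, enorm2 (A.mulVec x.1) :=
  Real.iInf_nonneg fun _ => enorm2_nonneg _

lemma sphInf_mul_le [Nonempty {x : κ → ℝ // enorm2 x = 1}]
    (A : Matrix ι κ ℝ) (x : κ → ℝ) :
    (⨅ y : {y : κ → ℝ // enorm2 y = 1}, enorm2 (A.mulVec y.1)) * enorm2 x
      ≤ enorm2 (A.mulVec x) := by
  rcases eq_or_ne x 0 with rfl | hx
  · simp [(enorm2_eq_zero_iff (0 : κ → ℝ)).2 rfl, enorm2_nonneg]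
  · have hpos : 0 < enorm2 x :=
      lt_of_le_of_ne (enorm2_nonneg x) (Ne.symm (mt (enorm2_eq_zero_iff x).1 hx))
    have hunit : enorm2 ((enorm2 x)⁻¹ • x) = 1 := by
      rw [enorm2_smul, abs_of_pos (inv_pos.2 hpos), inv_mul_cancel₀ hpos.ne']
    have hbdd : BddBelow (Set.range fun y : {y : κ → ℝ // enorm2 y = 1} =>
        enorm2 (A.mulVec y.1)) := ⟨0, by rintro r ⟨y, rfl⟩; exact enorm2_nonneg _⟩
    have h1 := ciInf_le hbdd (⟨(enorm2 x)⁻¹ • x, hunit⟩ : {y : κ → ℝ // enorm2 y = 1})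
    have h2 : enorm2 (A.mulVec ((enorm2 x)⁻¹ • x)) = (enorm2 x)⁻¹ * enorm2 (A.mulVec x) := by
      rw [mulVec_smul, enorm2_smul, abs_of_pos (inv_pos.2 hpos)]
    rw [h2] at h1
    calc (⨅ y : {y : κ → ℝ // enorm2 y = 1}, enorm2 (A.mulVec y.1)) * enorm2 x
        ≤ ((enorm2 x)⁻¹ * enorm2 (A.mulVec x)) * enorm2 x :=
          mul_le_mul_of_nonneg_right h1 (enorm2_nonneg x)
      _ = enorm2 (A.mulVec x) := by field_simp

end helpers

/-- block leave-one-out bound.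
For matrices `U_1, …, U_t ∈ ℝ^{n×m}`, if for each `j` the matrix `P j` is the
orthogonal projection onto the orthogonal complement of the range of the
concatenation of the `U_{j'}`, `j' ≠ j`, then, with
`ℓ_B = min_j σ_min(P j * U j)`, we have
`ℓ_B/√t ≤ σ_min([U_1 | … | U_t]) ≤ ℓ_B`. -/
theorem statement16 {n m t : ℕ} (U : Fin t → Matrix (Fin n) (Fin m) ℝ)
    (P : Fin t → Matrix (Fin n) (Fin n) ℝ)
    (hP : ∀ j, IsOrthProjKer (P j)
      (Submodule.span ℝ
        {x : Fin n → ℝ | ∃ j', j' ≠ j ∧ ∃ c : Fin m, x = fun r => U j' r c})) :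
    (⨅ j, sval (P j * U j) m) / Real.sqrt t ≤ sval (hcat U) (t * m) ∧
      sval (hcat U) (t * m) ≤ ⨅ j, sval (P j * U j) m := by
  classical
  have hfull : sval (hcat U) (t * m)
      = ⨅ x : {x : Fin t × Fin m → ℝ // enorm2 x = 1}, enorm2 ((hcat U).mulVec x.1) :=
    sval_full' _ _ (by simp)
  have hfullj : ∀ j, sval (P j * U j) m
      = ⨅ x : {x : Fin m → ℝ // enorm2 x = 1}, enorm2 ((P j * U j).mulVec x.1) :=
    fun j => sval_full' _ _ (by simp)
  rcases Nat.eq_zero_or_pos t with ht | ht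
  · subst ht
    have h1 : (⨅ j : Fin 0, sval (P j * U j) m) = 0 := Real.iInf_of_isEmpty _
    haveI : IsEmpty {x : Fin 0 × Fin m → ℝ // enorm2 x = 1} := by
      constructor; rintro ⟨x, hx⟩
      have h0 : enorm2 x = 0 := by simp [enorm2]
      rw [h0] at hx; exact one_ne_zero hx.symm
    have h2 : sval (hcat U) (0 * m) = 0 := by rw [hfull, Real.iInf_of_isEmpty]
    rw [h1, h2]; norm_num
  haveI : Nonempty (Fin t) := ⟨⟨0, ht⟩⟩
  rcases Nat.eq_zero_or_pos m with hm | hm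
  · subst hm
    haveI : IsEmpty {x : Fin t × Fin 0 → ℝ // enorm2 x = 1} := by
      constructor; rintro ⟨x, hx⟩
      have h0 : enorm2 x = 0 := by simp [enorm2]
      rw [h0] at hx; exact one_ne_zero hx.symm
    haveI : IsEmpty {x : Fin 0 → ℝ // enorm2 x = 1} := by
      constructor; rintro ⟨x, hx⟩
      have h0 : enorm2 x = 0 := by simp [enorm2]
      rw [h0] at hx; exact one_ne_zero hx.symm
    have h2 : sval (hcat U) (t * 0) = 0 := by rw [hfull, Real.iInf_of_isEmpty]
    have h1 : (⨅ j : Fin t, sval (P j * U j) 0) = 0 := by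
      have : ∀ j : Fin t, sval (P j * U j) 0 = 0 := fun j => by
        rw [hfullj j, Real.iInf_of_isEmpty]
      simp only [this]
      exact ciInf_const
    rw [h1, h2]; norm_num
  -- main case
  haveI hsphm : Nonempty {x : Fin m → ℝ // enorm2 x = 1} :=
    ⟨⟨Pi.single ⟨0, hm⟩ 1, enorm2_single _⟩⟩
  haveI hsphtm : Nonempty {x : Fin t × Fin m → ℝ // enorm2 x = 1} :=
    ⟨⟨Pi.single (⟨0, ht⟩, ⟨0, hm⟩) 1, enorm2_single _⟩⟩
  set M := hcat U with hM
  set W : Fin t → Submodule ℝ (Fin n → ℝ) := fun j => Submodule.span ℝ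
      {x : Fin n → ℝ | ∃ j', j' ≠ j ∧ ∃ c : Fin m, x = fun r => U j' r c} with hWdef
  have hker : ∀ j (v : Fin n → ℝ), (P j).mulVec v = 0 ↔ v ∈ W j := fun j => (hP j).2.2
  have hsymP : ∀ j, (P j)ᵀ = P j := fun j => (hP j).1
  have hidemP : ∀ j, P j * P j = P j := fun j => (hP j).2.1
  have hcol : ∀ j j', j' ≠ j → ∀ z : Fin m → ℝ, (U j').mulVec z ∈ W j := by
    intro j j' hne z
    have hrepr : (U j').mulVec z = ∑ c, z c • (fun r => U j' r c) := by
      ext r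
      simp [mulVec, dotProduct, Finset.sum_apply, mul_comm]
    rw [hrepr]
    exact Submodule.sum_mem _ fun c _ =>
      Submodule.smul_mem _ _ (Submodule.subset_span ⟨j', hne, c, rfl⟩)
  have hPUz : ∀ j j', j' ≠ j → ∀ z : Fin m → ℝ,
      (P j).mulVec ((U j').mulVec z) = 0 := fun j j' hne z =>
    (hker j _).2 (hcol j j' hne z)
  have hMdecomp : ∀ x : Fin t × Fin m → ℝ,
      M.mulVec x = ∑ j', (U j').mulVec (fun c => x (j', c)) := by
    intro x; ext r
    simp [hM, hcat, mulVec, dotProduct, Fintype.sum_prod_type, Finset.sum_apply]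
  have hPM : ∀ j (x : Fin t × Fin m → ℝ),
      (P j).mulVec (M.mulVec x) = (P j).mulVec ((U j).mulVec fun c => x (j, c)) := by
    intro j x
    rw [hMdecomp]
    have hms : (P j).mulVec (∑ j', (U j').mulVec fun c => x (j', c))
        = ∑ j', (P j).mulVec ((U j').mulVec fun c => x (j', c)) := by
      have h0 := map_sum (P j).mulVecLin (fun j' => (U j').mulVec fun c => x (j', c)) Finset.univ
      simpa only [mulVecLin_apply] using h0
    rw [hms, Finset.sum_eq_single j]
    · intro b _ hb; exact hPUz j b hb _
    · intro h; exact absurd (Finset.mem_univ j) h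
  have hpyth : ∀ x : Fin t × Fin m → ℝ,
      enorm2 x ^ 2 = ∑ j, enorm2 (fun c => x (j, c)) ^ 2 := by
    intro x
    simp [enorm2_sq, Fintype.sum_prod_type]
  constructor
  · -- lower bound
    rw [hfull]
    have hℓnn : 0 ≤ ⨅ j, sval (P j * U j) m :=
      Real.iInf_nonneg fun j => by rw [hfullj j]; exact sphInf_nonneg _
    refine le_ciInf fun xs => ?_
    obtain ⟨x, hx⟩ := xs
    have hsum : ∑ j, enorm2 (fun c => x (j, c)) ^ 2 = 1 := by
      rw [← hpyth, hx]; norm_num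
    have hex : ∃ j, 1 / (t : ℝ) ≤ enorm2 (fun c => x (j, c)) ^ 2 := by
      by_contra hcon
      push_neg at hcon
      have hlt : ∑ j, enorm2 (fun c => x (j, c)) ^ 2 < ∑ _j : Fin t, 1 / (t : ℝ) :=
        Finset.sum_lt_sum_of_nonempty Finset.univ_nonempty fun j _ => hcon j
      rw [hsum, Finset.sum_const, Finset.card_univ, Fintype.card_fin] at hlt
      have htpos : (0 : ℝ) < t := by exact_mod_cast ht
      rw [nsmul_eq_mul, mul_one_div, div_self htpos.ne'] at hlt
      exact lt_irrefl _ hlt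
    obtain ⟨j, hj⟩ := hex
    have hxj : 1 / Real.sqrt t ≤ enorm2 (fun c => x (j, c)) := by
      have h1 := Real.sqrt_le_sqrt hj
      rwa [one_div, Real.sqrt_inv, Real.sqrt_sq (enorm2_nonneg _), ← one_div] at h1
    have hbddj : BddBelow (Set.range fun j => sval (P j * U j) m) := by
      refine ⟨0, ?_⟩; rintro r ⟨j', rfl⟩
      dsimp only
      rw [hfullj j']; exact sphInf_nonneg _
    have hℓj : (⨅ j, sval (P j * U j) m) ≤ sval (P j * U j) m := ciInf_le hbddj j
    calc (⨅ j, sval (P j * U j) m) / Real.sqrt t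
        = (⨅ j, sval (P j * U j) m) * (1 / Real.sqrt t) := by rw [mul_one_div]
      _ ≤ (⨅ j, sval (P j * U j) m) * enorm2 (fun c => x (j, c)) :=
          mul_le_mul_of_nonneg_left hxj hℓnn
      _ ≤ sval (P j * U j) m * enorm2 (fun c => x (j, c)) :=
          mul_le_mul_of_nonneg_right hℓj (enorm2_nonneg _)
      _ ≤ enorm2 ((P j * U j).mulVec fun c => x (j, c)) := by
          rw [hfullj j]; exact sphInf_mul_le _ _
      _ = enorm2 ((P j).mulVec (M.mulVec x)) := by
          rw [← mulVec_mulVec, hPM j x]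
      _ ≤ enorm2 (M.mulVec x) := proj_contract _ (hsymP j) (hidemP j) _
  · -- upper bound
    rw [hfull]
    refine le_ciInf fun j => ?_
    rw [hfullj j]
    refine le_ciInf fun ys => ?_
    obtain ⟨y, hy⟩ := ys
    set v : Fin n → ℝ := (U j).mulVec y with hv
    have hsub : ∀ u : Fin n → ℝ, u - (P j).mulVec u ∈ W j := by
      intro u
      rw [← hker, mulVec_sub, mulVec_mulVec, hidemP j, sub_self]
    have hw : v - (P j).mulVec v ∈ W j := hsub v
    have hrep : ∀ w ∈ W j, ∃ z : Fin t × Fin m → ℝ,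
        (∀ c, z (j, c) = 0) ∧ M.mulVec z = w := by
      intro w hwmem
      induction hwmem using Submodule.span_induction with
      | mem a ha =>
        obtain ⟨j', hne, c, rfl⟩ := ha
        refine ⟨Pi.single (j', c) 1, fun c' => ?_, ?_⟩
        · exact Pi.single_eq_of_ne (by simp [Prod.ext_iff, hne.symm]) 1
        · ext r
          simp [hM, hcat, mulVec, dotProduct, Pi.single_apply]
      | zero => exact ⟨0, fun c => rfl, by simp⟩
      | add a b _ _ iha ihb =>
        obtain ⟨z1, hz1, hz1'⟩ := iha
        obtain ⟨z2, hz2, hz2'⟩ := ihb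
        exact ⟨z1 + z2, fun c => by simp [hz1 c, hz2 c],
          by rw [mulVec_add, hz1', hz2']⟩
      | smul a r _ ihr =>
        obtain ⟨z, hz, hz'⟩ := ihr
        exact ⟨a • z, fun c => by simp [hz c], by rw [mulVec_smul, hz']⟩
    obtain ⟨z, hz0, hzw⟩ := hrep _ hw
    set x : Fin t × Fin m → ℝ := (fun p => if p.1 = j then y p.2 else 0) - z with hxdef
    have hind : M.mulVec (fun p : Fin t × Fin m => if p.1 = j then y p.2 else 0)
        = (U j).mulVec y := by
      ext r
      simp only [hM, hcat, mulVec, dotProduct, Fintype.sum_prod_type]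
      rw [Finset.sum_eq_single j]
      · simp
      · intro b _ hb; simp [hb]
      · intro h; exact absurd (Finset.mem_univ j) h
    have hMx : M.mulVec x = (P j).mulVec v := by
      rw [hxdef, mulVec_sub, hzw, hind, ← hv]
      abel
    have hxj : (fun c => x (j, c)) = y := by
      funext c; simp [hxdef, hz0 c]
    have hx1 : 1 ≤ enorm2 x := by
      have h2 : 1 ≤ enorm2 x ^ 2 := by
        rw [hpyth]
        calc (1 : ℝ) = enorm2 (fun c => x (j, c)) ^ 2 := by rw [hxj, hy]; norm_num
          _ ≤ ∑ j', enorm2 (fun c => x (j', c)) ^ 2 :=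
            Finset.single_le_sum (f := fun j' => (enorm2 fun c => x (j', c)) ^ 2)
              (fun j' _ => sq_nonneg _) (Finset.mem_univ j)
      nlinarith [enorm2_nonneg x]
    have hkey := sphInf_mul_le M x
    rw [hMx] at hkey
    have hPU : (P j * U j).mulVec y = (P j).mulVec v := by
      rw [← mulVec_mulVec, ← hv]
    rw [hPU]
    calc (⨅ xs : {x : Fin t × Fin m → ℝ // enorm2 x = 1}, enorm2 (M.mulVec xs.1))
        ≤ (⨅ xs : {x : Fin t × Fin m → ℝ // enorm2 x = 1}, enorm2 (M.mulVec xs.1))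
            * enorm2 x := le_mul_of_one_le_right (sphInf_nonneg M) hx1
      _ ≤ enorm2 ((P j).mulVec v) := hkey


end
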